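/- arXiv:2407.06933 — 3 statements merged into one kernel-verified Lean document; each statement's English description precedes it below -/
import Mathlib

section
/- The group G_Δ = ⟨a, b, c | aba = b, bcb = c, cac = a⟩ has torsion: the element g = a*b*c satisfies g^2 = 1 and g ≠ 1. -/
/-- Relations for `G_Δ = ⟨a, b, c | aba = b, bcb = c, cac = a⟩`. -/
def triangleRels : Set (FreeGroup (Fin 3)) :=
  { FreeGroup.of 0 * FreeGroup.of 1 * FreeGroup.of 0 * (FreeGroup.of 1)⁻¹,
    FreeGroup.of 1 * FreeGroup.of 2 * FreeGroup.of 1 * (FreeGroup.of 2)⁻¹,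
    FreeGroup.of 2 * FreeGroup.of 0 * FreeGroup.of 2 * (FreeGroup.of 0)⁻¹ }

/-- The twisted RAAG of the directed triangle. -/
abbrev GDelta : Type := PresentedGroup triangleRels

lemma rel_one {r : FreeGroup (Fin 3)} (hr : r ∈ triangleRels) :
    PresentedGroup.mk triangleRels r = 1 :=
  (QuotientGroup.eq_one_iff r).mpr (Subgroup.subset_normalClosure hr)

lemma rels_hold : ∀ r ∈ triangleRels,
    FreeGroup.lift (fun _ : Fin 3 => (Multiplicative.ofAdd (1 : ZMod 2))) r = 1 := by
  rintro r (rfl | rfl | rfl) <;> simp <;> decide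

theorem gdelta_has_torsion :
    ((PresentedGroup.of 0 * PresentedGroup.of 1 * PresentedGroup.of 2 : GDelta) ^ 2 = 1) ∧
      (PresentedGroup.of 0 * PresentedGroup.of 1 * PresentedGroup.of 2 : GDelta) ≠ 1 := by
  set a : GDelta := PresentedGroup.of 0
  set b : GDelta := PresentedGroup.of 1
  set c : GDelta := PresentedGroup.of 2
  have e1 : a * b * a = b := mul_inv_eq_one.mp (rel_one (by left; rfl))
  have e2 : b * c * b = c := mul_inv_eq_one.mp (rel_one (by right; left; rfl))
  have e3 : c * a * c = a := mul_inv_eq_one.mp (rel_one (by right; right; rfl))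
  have hca : c * a = a * c⁻¹ := by
    calc c * a = (c * a * c) * c⁻¹ := by group
    _ = a * c⁻¹ := by rw [e3]
  have hbc : c⁻¹ * b * c = b⁻¹ := by
    have : b * c = c * b⁻¹ := by
      calc b * c = (b * c * b) * b⁻¹ := by group
      _ = c * b⁻¹ := by rw [e2]
    calc c⁻¹ * b * c = c⁻¹ * (b * c) := by group
    _ = c⁻¹ * (c * b⁻¹) := by rw [this]
    _ = b⁻¹ := by group
  constructor
  · calc (a * b * c) ^ 2 = a * b * (c * a) * b * c := by rw [sq]; group
    _ = a * b * (a * c⁻¹) * b * c := by rw [hca]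
    _ = (a * b * a) * (c⁻¹ * b * c) := by group
    _ = b * b⁻¹ := by rw [e1, hbc]
    _ = 1 := by group
  · intro h
    have := congrArg (PresentedGroup.toGroup rels_hold) h
    simp [PresentedGroup.toGroup.of] at this
    exact absurd this (by decide)
end

section
/- In the group G_Δ = ⟨a, b, c | aba = b, bcb = c, cac = a⟩, every element can be written in the form a^m * b^n * c^p for some integers m, n, p. -/
/-!
The relation `x * y * x = y` says that conjugation by `y` inverts `x`, so `y ^ j * x ^ k` equals
`x ^ (± k) * y ^ j` with sign `(-1) ^ j`. In `G_Δ` conjugation by `b`, `c`, `a` inverts `a`, `b`, `c`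
respectively, so a power of a generator multiplied on the right of `a ^ m * b ^ n * c ^ p` can be
moved to its place at the cost of signs. Hence these products form a set containing `1` and closed
under right multiplication by the generators and their inverses, which is the whole group.
-/

section
variable {G : Type*} [Group G] {x y : G}

theorem zpow_mul_zpow_eq_of_mul_mul_eq (h : x * y * x = y) (j k : ℤ) :
    y ^ j * x ^ k = x ^ (j.negOnePow * k : ℤ) * y ^ j := by
  have hy : SemiconjBy y x x⁻¹ := by
    show y * x = x⁻¹ * y
    conv_rhs => rw [← h]
    group
  have hy_inv (k : ℤ) : y⁻¹ * x ^ k = x ^ (-k) * y⁻¹ := by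
    have := (hy.zpow_right (-k)).inv_symm_left
    rwa [inv_zpow', neg_neg] at this
  induction j using Int.induction_on generalizing k with
  | zero => simp
  | succ j ih =>
    rw [zpow_add_one, mul_assoc, (hy.zpow_right k).eq, inv_zpow', ← mul_assoc, ih,
      mul_assoc, Int.negOnePow_succ, Units.val_neg, neg_mul, mul_neg]
  | pred j ih =>
    rw [zpow_sub_one, mul_assoc, hy_inv, ← mul_assoc, ih, mul_assoc, Int.negOnePow_sub,
      Int.negOnePow_one, mul_neg_one, Units.val_neg, neg_mul, mul_neg]

theorem zpow_mul_zpow_eq_of_mul_mul_eq' (h : x * y * x = y) (j k : ℤ) :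
    x ^ k * y ^ j = y ^ j * x ^ (j.negOnePow * k : ℤ) := by
  rw [zpow_mul_zpow_eq_of_mul_mul_eq h, ← mul_assoc, ← Units.val_mul, Int.units_mul_self,
    Units.val_one, one_mul]

end

namespace GDelta

local notation "a" => (PresentedGroup.of 0 : GDelta)
local notation "b" => (PresentedGroup.of 1 : GDelta)
local notation "c" => (PresentedGroup.of 2 : GDelta)

theorem rel_ab : a * b * a = b :=
  PresentedGroup.mk_eq_mk_of_mul_inv_mem (by simp [triangleRels])

theorem rel_bc : b * c * b = c :=
  PresentedGroup.mk_eq_mk_of_mul_inv_mem (by simp [triangleRels])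

theorem rel_ca : c * a * c = a :=
  PresentedGroup.mk_eq_mk_of_mul_inv_mem (by simp [triangleRels])

def normalForm (m n p : ℤ) : GDelta := a ^ m * b ^ n * c ^ p

theorem normalForm_mul_c_zpow (m n p k : ℤ) :
    normalForm m n p * c ^ k = normalForm m n (p + k) := by
  rw [normalForm, normalForm, mul_assoc, zpow_add]

theorem normalForm_mul_b_zpow (m n p k : ℤ) :
    normalForm m n p * b ^ k = normalForm m (n + p.negOnePow * k) p := by
  rw [normalForm, normalForm, mul_assoc, zpow_mul_zpow_eq_of_mul_mul_eq rel_bc, ← mul_assoc,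
    mul_assoc _ (b ^ n), ← zpow_add]

theorem normalForm_mul_a_zpow (m n p k : ℤ) :
    normalForm m n p * a ^ k = normalForm (m + n.negOnePow * k) n (k.negOnePow * p) := by
  rw [normalForm, normalForm, mul_assoc, zpow_mul_zpow_eq_of_mul_mul_eq' rel_ca, ← mul_assoc,
    mul_assoc (a ^ m), zpow_mul_zpow_eq_of_mul_mul_eq rel_ab, ← mul_assoc, ← zpow_add]

theorem exists_normalForm_mul_of_zpow (i : Fin 3) (m n p k : ℤ) :
    ∃ m' n' p' : ℤ, normalForm m n p * PresentedGroup.of i ^ k = normalForm m' n' p' := by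
  fin_cases i
  · exact ⟨_, _, _, normalForm_mul_a_zpow m n p k⟩
  · exact ⟨_, _, _, normalForm_mul_b_zpow m n p k⟩
  · exact ⟨_, _, _, normalForm_mul_c_zpow m n p k⟩

end GDelta

theorem gdelta_normal_form (g : GDelta) :
    ∃ m n p : ℤ,
      g = (PresentedGroup.of 0 : GDelta) ^ m * PresentedGroup.of 1 ^ n *
            PresentedGroup.of 2 ^ p := by
  show ∃ m n p, g = GDelta.normalForm m n p
  have hg : g ∈ Subgroup.closure (Set.range PresentedGroup.of) := by simp
  induction hg using Subgroup.closure_induction_right with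
  | one => exact ⟨0, 0, 0, by simp [GDelta.normalForm]⟩
  | mul_right g _ _ hgen ih =>
    obtain ⟨i, rfl⟩ := hgen
    obtain ⟨m, n, p, rfl⟩ := ih
    simpa only [zpow_one] using GDelta.exists_normalForm_mul_of_zpow i m n p 1
  | mul_inv_cancel g _ _ hgen ih =>
    obtain ⟨i, rfl⟩ := hgen
    obtain ⟨m, n, p, rfl⟩ := ih
    simpa only [zpow_neg_one] using GDelta.exists_normalForm_mul_of_zpow i m n p (-1)
end

section
/- If two finite mixed graphs Γ₁ and Γ₂ have different numbers of vertices, or different numbers of vertices that are origins of directed edges, then the twisted right-angled Artin groups G_{Γ₁} and G_{Γ₂} are not isomorphic. -/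
/-! A homomorphism from `G_Γ` to an abelian group `A` is a labelling of the vertices by `A` in
which every origin of a directed edge is sent to `A[2]`: commutators die, and `aba = b` becomes
`a² = 1`. Hence `|Hom(G_Γ, A)| = |A[2]|^k |A|^(n-k)` is an isomorphism invariant;
`A = ℤ/2` gives `2^n` and `A = ℤ/4` gives `2^(2n-k)`, which together recover `n` and `k`. -/

/-- A mixed graph on a vertex type `V`. -/
structure MixedGraph (V : Type*) where
  und : V → V → Prop
  dir : V → V → Prop

/-- The relations of the tRAAG of a mixed graph. -/
def traagRels {V : Type*} (Γ : MixedGraph V) : Set (FreeGroup V) :=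
  {r | (∃ a b, Γ.und a b ∧
          r = FreeGroup.of a * FreeGroup.of b * (FreeGroup.of a)⁻¹ * (FreeGroup.of b)⁻¹) ∨
       (∃ a b, Γ.dir a b ∧
          r = FreeGroup.of a * FreeGroup.of b * FreeGroup.of a * (FreeGroup.of b)⁻¹)}

namespace PresentedGroup

variable {α G : Type*} [Group G] {rels : Set (FreeGroup α)}

theorem lift_comp_of (φ : PresentedGroup rels →* G) :
    FreeGroup.lift (φ ∘ of) = φ.comp (mk rels) :=
  FreeGroup.ext_hom _ _ fun _ => by simp [of]

def homEquiv :
    (PresentedGroup rels →* G) ≃ {f : α → G // ∀ r ∈ rels, FreeGroup.lift f r = 1} where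
  toFun φ := ⟨φ ∘ of, fun r hr => by
    rw [lift_comp_of, MonoidHom.comp_apply, one_of_mem hr, map_one]⟩
  invFun f := toGroup f.2
  left_inv φ := ext fun _ => toGroup.of _
  right_inv f := Subtype.ext <| funext fun _ => toGroup.of _

end PresentedGroup

namespace MixedGraph

variable {V : Type*} (Γ : MixedGraph V)

def IsOrigin (v : V) : Prop := ∃ b, Γ.dir v b

variable {A : Type*} [CommGroup A]

theorem lift_mem_traagRels_eq_one_iff {f : V → A} :
    (∀ r ∈ traagRels Γ, FreeGroup.lift f r = 1) ↔ ∀ v, Γ.IsOrigin v → f v ^ 2 = 1 := by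
  have lift_und (a b : V) : FreeGroup.lift f (.of a * .of b * (.of a)⁻¹ * (.of b)⁻¹) = 1 := by
    simp only [map_mul, map_inv, FreeGroup.lift_apply_of]
    rw [mul_right_comm (f a), mul_inv_cancel_right, mul_inv_cancel]
  have lift_dir (a b : V) : FreeGroup.lift f (.of a * .of b * .of a * (.of b)⁻¹) = f a ^ 2 := by
    simp only [map_mul, map_inv, FreeGroup.lift_apply_of]
    rw [mul_right_comm (f a), mul_inv_cancel_right, sq]
  constructor
  · rintro h v ⟨b, hb⟩
    rw [← lift_dir v b]
    exact h _ (Or.inr ⟨v, b, hb, rfl⟩)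
  · rintro h r (⟨a, b, -, rfl⟩ | ⟨a, b, hab, rfl⟩)
    · exact lift_und a b
    · rw [lift_dir]
      exact h a ⟨b, hab⟩

theorem card_monoidHom_traag [Fintype V] :
    Nat.card (PresentedGroup (traagRels Γ) →* A) =
      Nat.card {x : A // x ^ 2 = 1} ^ Nat.card {v // Γ.IsOrigin v} *
        Nat.card A ^ (Nat.card V - Nat.card {v // Γ.IsOrigin v}) := by
  classical
  calc Nat.card (PresentedGroup (traagRels Γ) →* A)
      = Nat.card {f : V → A // ∀ v, Γ.IsOrigin v → f v ^ 2 = 1} :=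
        Nat.card_congr <| PresentedGroup.homEquiv.trans <|
          Equiv.subtypeEquivRight fun _ => Γ.lift_mem_traagRels_eq_one_iff
    _ = ∏ v, Nat.card {x : A // Γ.IsOrigin v → x ^ 2 = 1} :=
        (Nat.card_congr (Equiv.subtypePiEquivPi
          (p := fun v (x : A) => Γ.IsOrigin v → x ^ 2 = 1))).trans Nat.card_pi
    _ = (∏ v : {v // Γ.IsOrigin v}, Nat.card {x : A // x ^ 2 = 1}) *
          ∏ v : {v // ¬ Γ.IsOrigin v}, Nat.card A := by
        rw [← Fintype.prod_subtype_mul_prod_subtype Γ.IsOrigin]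
        congr 1 <;> refine Finset.prod_congr rfl fun v _ => Nat.card_congr ?_
        · exact Equiv.subtypeEquivRight fun _ => imp_iff_right v.2
        · exact Equiv.subtypeUnivEquiv fun _ h => absurd h v.2
    _ = _ := by
        simp only [Finset.prod_const, Finset.card_univ, Fintype.card_subtype_compl,
          Nat.card_eq_fintype_card]

theorem card_monoidHom_traag_zmod_two [Fintype V] :
    Nat.card (PresentedGroup (traagRels Γ) →* Multiplicative (ZMod 2)) = 2 ^ Nat.card V := by
  have two_torsion : Nat.card {x : Multiplicative (ZMod 2) // x ^ 2 = 1} = 2 := by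
    rw [Nat.card_eq_fintype_card]; decide
  rw [card_monoidHom_traag, two_torsion, show Nat.card (Multiplicative (ZMod 2)) = 2 from
    Nat.card_zmod 2, ← pow_add, Nat.add_sub_cancel' (Finite.card_subtype_le _)]

theorem card_monoidHom_traag_zmod_four [Fintype V] :
    Nat.card (PresentedGroup (traagRels Γ) →* Multiplicative (ZMod 4)) =
      2 ^ (2 * Nat.card V - Nat.card {v // Γ.IsOrigin v}) := by
  have two_torsion : Nat.card {x : Multiplicative (ZMod 4) // x ^ 2 = 1} = 2 := by
    rw [Nat.card_eq_fintype_card]; decide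
  have origins_le := Finite.card_subtype_le Γ.IsOrigin
  rw [card_monoidHom_traag, two_torsion, show Nat.card (Multiplicative (ZMod 4)) = 2 ^ 2 from
    Nat.card_zmod 4, ← pow_mul, ← pow_add]
  congr 1
  omega

end MixedGraph

theorem traag_not_iso_of_different_invariants
    {V₁ V₂ : Type*} [Fintype V₁] [Fintype V₂]
    (Γ₁ : MixedGraph V₁) (Γ₂ : MixedGraph V₂)
    (h : Nat.card V₁ ≠ Nat.card V₂ ∨
      Nat.card {v : V₁ // ∃ b, Γ₁.dir v b} ≠ Nat.card {v : V₂ // ∃ b, Γ₂.dir v b}) :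
    IsEmpty (PresentedGroup (traagRels Γ₁) ≃* PresentedGroup (traagRels Γ₂)) := by
  refine ⟨fun e => ?_⟩
  have card_hom_eq (A : Type) [CommGroup A] := Nat.card_congr (e.monoidHomCongrLeftEquiv (N := A))
  have hn : Nat.card V₁ = Nat.card V₂ := by
    have h2 := card_hom_eq (Multiplicative (ZMod 2))
    rw [Γ₁.card_monoidHom_traag_zmod_two, Γ₂.card_monoidHom_traag_zmod_two] at h2
    exact Nat.pow_right_injective le_rfl h2
  have hk : Nat.card {v // Γ₁.IsOrigin v} = Nat.card {v // Γ₂.IsOrigin v} := by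
    have h4 := card_hom_eq (Multiplicative (ZMod 4))
    rw [Γ₁.card_monoidHom_traag_zmod_four, Γ₂.card_monoidHom_traag_zmod_four] at h4
    have := Nat.pow_right_injective le_rfl h4
    have := Finite.card_subtype_le Γ₁.IsOrigin
    have := Finite.card_subtype_le Γ₂.IsOrigin
    omega
  exact h.elim (· hn) (· hk)
end
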